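/- arXiv:1501.04600 — 2 statements merged into one kernel-verified Lean document; each statement's English description precedes it below -/
import Mathlib

section
/- Let ℓ be a prime, g ∈ 𝔰𝔩₂(ℤ_ℓ), w ∈ ℤ_ℓ², and let β be the minimal valuation of the coordinates of w. Suppose g·w ≡ λ·w (mod ℓ^n) for some λ ∈ ℤ_ℓ. Then either the characteristic polynomial of g has a root ν ∈ ℤ_ℓ with v_ℓ(ν − λ) ≥ v_ℓ(λ) + 3, or β ≥ n − 2(2 + v_ℓ(λ)). -/
/-!
Since `g` is traceless, Cayley–Hamilton gives `g² = D` with `D = -det g`, so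
`(D - λ²) w = (g + λ)(g w - λ w) ≡ 0 (mod ℓⁿ)`. A coordinate of `w` of valuation exactly `β`
shows `v(D - λ²) ≥ n - β`. If the bound on `β` fails, then `v(D - λ²) > 2 v(2λ)` (as `v(2) ≤ 1`),
so Hensel's lemma gives a square root `ν` of `D`, i.e. a root of `p_g`, with `|ν - λ| < |2λ|`.
Then `|ν + λ| = |2λ|`, and `v(ν - λ) = v(D - λ²) - v(2λ)` is large.
-/

open Polynomial

namespace Matrix

variable {R : Type*} [CommRing R]

theorem charpoly_eq_X_sq_add_C_det_of_trace_eq_zero [Nontrivial R]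
    {g : Matrix (Fin 2) (Fin 2) R} (hg : g.trace = 0) : g.charpoly = X ^ 2 + C g.det := by
  rw [charpoly_fin_two, hg, C_0, zero_mul, sub_zero]

theorem mul_self_eq_neg_det_smul_one_of_trace_eq_zero {g : Matrix (Fin 2) (Fin 2) R}
    (hg : g.trace = 0) : g * g = -g.det • (1 : Matrix (Fin 2) (Fin 2) R) := by
  have h11 : g 1 1 = -g 0 0 := by rw [trace_fin_two] at hg; linear_combination hg
  ext i j
  fin_cases i <;> fin_cases j <;> simp [mul_apply, det_fin_two, h11] <;> ring

theorem neg_det_sub_sq_smul_eq_mulVec_of_trace_eq_zero {g : Matrix (Fin 2) (Fin 2) R}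
    (hg : g.trace = 0) (w : Fin 2 → R) (a : R) :
    (-g.det - a ^ 2) • w = (g + a • 1) *ᵥ (g *ᵥ w - a • w) := by
  have hfactor :
      (g + a • 1) * (g - a • 1) = (-g.det - a ^ 2) • (1 : Matrix (Fin 2) (Fin 2) R) := by
    rw [← ((Commute.one_right g).smul_right a).mul_self_sub_mul_self_eq,
      mul_self_eq_neg_det_smul_one_of_trace_eq_zero hg, smul_mul_smul_comm, mul_one, sub_smul, sq]
  calc (-g.det - a ^ 2) • w = ((g + a • 1) * (g - a • 1)) *ᵥ w := by
        rw [hfactor, smul_mulVec, one_mulVec]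
    _ = (g + a • 1) *ᵥ (g *ᵥ w - a • w) := by
        rw [← mulVec_mulVec, sub_mulVec, smul_mulVec, one_mulVec]

theorem dvd_mulVec_apply {n m : Type*} [Fintype m] {M : Matrix n m R} {v : m → R} {d : R}
    (hv : ∀ j, d ∣ v j) (i : n) : d ∣ (M *ᵥ v) i :=
  Finset.dvd_sum fun j _ => (hv j).mul_left _

end Matrix

theorem Prime.pow_dvd_of_pow_add_dvd_mul {M : Type*} [CommMonoidWithZero M] [IsCancelMulZero M]
    {π x c : M} {β k : ℕ} (hπ : Prime π) (hx : π ^ β ∣ x) (hx' : ¬π ^ (β + 1) ∣ x)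
    (h : π ^ (β + k) ∣ c * x) : π ^ k ∣ c := by
  obtain ⟨y, rfl⟩ := hx
  have hy : ¬π ∣ y := fun hy => hx' (pow_succ π β ▸ mul_dvd_mul_left _ hy)
  rw [pow_add, mul_left_comm] at h
  exact hπ.pow_dvd_of_dvd_mul_right k hy ((mul_dvd_mul_iff_left (pow_ne_zero β hπ.ne_zero)).mp h)

namespace PadicInt

variable {p : ℕ} [Fact p.Prime]

theorem pow_dvd_iff_norm_le {k : ℕ} {x : ℤ_[p]} :
    (p : ℤ_[p]) ^ k ∣ x ↔ ‖x‖ ≤ (p : ℝ) ^ (-k : ℤ) := by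
  rw [norm_le_pow_iff_mem_span_pow, Ideal.mem_span_singleton]

theorem zpow_neg_le_norm_of_not_pow_succ_dvd {k : ℕ} {x : ℤ_[p]}
    (h : ¬(p : ℤ_[p]) ^ (k + 1) ∣ x) : (p : ℝ) ^ (-k : ℤ) ≤ ‖x‖ := by
  rw [pow_dvd_iff_norm_le, norm_le_pow_iff_norm_lt_pow_add_one, not_lt] at h
  simpa [add_comm] using h

theorem inv_le_norm_two : (p : ℝ)⁻¹ ≤ ‖(2 : ℤ_[p])‖ := by
  have hp := (Fact.out : p.Prime).two_le
  have h : ¬(p : ℤ_[p]) ^ 2 ∣ ((2 : ℤ) : ℤ_[p]) := by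
    rw [pow_p_dvd_int_iff]
    intro hdvd
    have := Int.le_of_dvd two_pos hdvd
    nlinarith
  simpa using zpow_neg_le_norm_of_not_pow_succ_dvd h

theorem exists_sq_eq_of_pow_dvd_sub_sq {D a : ℤ_[p]} {v k : ℕ} (hk : 0 < k)
    (ha : ¬(p : ℤ_[p]) ^ (v + 1) ∣ a) (hD : (p : ℤ_[p]) ^ (2 * (v + 1) + k) ∣ D - a ^ 2) :
    ∃ z : ℤ_[p], z ^ 2 = D ∧ (p : ℤ_[p]) ^ (v + 1 + k) ∣ z - a := by
  have hp : (1 : ℝ) < p := mod_cast (Fact.out : p.Prime).one_lt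
  have hp0 : (0 : ℝ) < p := zero_lt_one.trans hp
  have h2a : (p : ℝ) ^ (-(v + 1 : ℕ) : ℤ) ≤ ‖2 * a‖ := by
    rw [norm_mul, Nat.cast_succ, neg_add, zpow_add₀ hp0.ne', zpow_neg_one, mul_comm]
    exact mul_le_mul inv_le_norm_two (zpow_neg_le_norm_of_not_pow_succ_dvd ha)
      (zpow_pos hp0 _).le (norm_nonneg _)
  rw [pow_dvd_iff_norm_le] at hD
  have hsplit : (p : ℝ) ^ (-(2 * (v + 1) + k : ℕ) : ℤ) =
      (p : ℝ) ^ (-(v + 1 + k : ℕ) : ℤ) * (p : ℝ) ^ (-(v + 1 : ℕ) : ℤ) := by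
    rw [← zpow_add₀ hp0.ne']; push_cast; ring_nf
  have hF : ∀ x : ℤ_[p], aeval x (X ^ 2 - C D) = x ^ 2 - D := by simp
  have hF' : ∀ x : ℤ_[p], aeval x (derivative (X ^ 2 - C D)) = 2 * x := by
    simp [one_add_one_eq_two]
  have hhensel : ‖aeval a (X ^ 2 - C D)‖ < ‖aeval a (derivative (X ^ 2 - C D))‖ ^ 2 := by
    rw [hF, hF', norm_sub_rev]
    calc ‖D - a ^ 2‖ ≤ (p : ℝ) ^ (-(v + 1 + k : ℕ) : ℤ) * (p : ℝ) ^ (-(v + 1 : ℕ) : ℤ) :=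
          hsplit ▸ hD
      _ < (p : ℝ) ^ (-(v + 1 : ℕ) : ℤ) * (p : ℝ) ^ (-(v + 1 : ℕ) : ℤ) :=
          mul_lt_mul_of_pos_right (zpow_lt_zpow_right₀ hp (by omega)) (zpow_pos hp0 _)
      _ ≤ ‖2 * a‖ ^ 2 := by rw [sq]; gcongr
  obtain ⟨z, hz, hza, -, -⟩ := hensels_lemma hhensel
  rw [hF, sub_eq_zero] at hz
  rw [hF'] at hza
  have hzsum : ‖z + a‖ = ‖2 * a‖ := by
    rw [show z + a = (z - a) + 2 * a by ring, norm_add_eq_max_of_ne hza.ne, max_eq_right hza.le]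
  refine ⟨z, hz, pow_dvd_iff_norm_le.mpr ?_⟩
  have hprod : ‖z - a‖ * ‖2 * a‖ ≤
      (p : ℝ) ^ (-(v + 1 + k : ℕ) : ℤ) * (p : ℝ) ^ (-(v + 1 : ℕ) : ℤ) := by
    rw [← hzsum, ← norm_mul, ← hsplit, show (z - a) * (z + a) = D - a ^ 2 by rw [← hz]; ring]
    exact hD
  exact le_of_mul_le_mul_right (hprod.trans (by gcongr)) ((zpow_pos hp0 _).trans_le h2a)

end PadicInt

theorem approx_eigenvector_dichotomy_general (p : ℕ) [Fact p.Prime] (n : ℕ)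
    (g : Matrix (Fin 2) (Fin 2) ℤ_[p]) (hg : Matrix.trace g = 0)
    (w : Fin 2 → ℤ_[p]) (lam : ℤ_[p])
    (β : ℕ) (hβ₁ : ∀ i, (p : ℤ_[p]) ^ β ∣ w i) (hβ₂ : ∃ i, ¬ ((p : ℤ_[p]) ^ (β + 1) ∣ w i))
    (vlam : ℕ) (hv₂ : ¬ ((p : ℤ_[p]) ^ (vlam + 1) ∣ lam))
    (hcong : ∀ i, (p : ℤ_[p]) ^ n ∣ (g.mulVec w - lam • w) i) :
    (∃ ν : ℤ_[p], g.charpoly.eval ν = 0 ∧ (p : ℤ_[p]) ^ (vlam + 3) ∣ (ν - lam)) ∨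
      (β : ℤ) ≥ (n : ℤ) - 2 * (2 + (vlam : ℤ)) := by
  refine or_iff_not_imp_right.mpr fun hβn => ?_
  have hD : ∀ i, (p : ℤ_[p]) ^ n ∣ (-g.det - lam ^ 2) * w i := fun i => by
    rw [← smul_eq_mul, ← Pi.smul_apply, Matrix.neg_det_sub_sq_smul_eq_mulVec_of_trace_eq_zero hg]
    exact Matrix.dvd_mulVec_apply hcong i
  obtain ⟨i, hi⟩ := hβ₂
  have hDval : (p : ℤ_[p]) ^ (2 * (vlam + 1) + 2) ∣ -g.det - lam ^ 2 :=
    PadicInt.prime_p.pow_dvd_of_pow_add_dvd_mul (hβ₁ i) hi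
      ((pow_dvd_pow _ (by omega)).trans (hD i))
  obtain ⟨ν, hν, hνlam⟩ := PadicInt.exists_sq_eq_of_pow_dvd_sub_sq two_pos hv₂ hDval
  refine ⟨ν, ?_, hνlam⟩
  rw [Matrix.charpoly_eq_X_sq_add_C_det_of_trace_eq_zero hg, eval_add, eval_pow, eval_X, eval_C,
    hν, neg_add_cancel]

/-- Let `g ∈ 𝔰𝔩₂(ℤ_ℓ)`, `w ∈ ℤ_ℓ²` with minimal coordinate valuation `β`, and
suppose `g·w ≡ λ·w (mod ℓ^n)`.  Then either the characteristic polynomial of `g`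
has a root `ν ∈ ℤ_ℓ` with `v(ν - λ) ≥ v(λ) + 3`, or `β ≥ n - 2(2 + v(λ))`. -/
theorem approx_eigenvector_dichotomy (p : ℕ) [Fact p.Prime] (n : ℕ)
    (g : Matrix (Fin 2) (Fin 2) ℤ_[p]) (hg : Matrix.trace g = 0)
    (w : Fin 2 → ℤ_[p]) (lam : ℤ_[p])
    (β : ℕ) (hβ₁ : ∀ i, (p : ℤ_[p]) ^ β ∣ w i) (hβ₂ : ∃ i, ¬ ((p : ℤ_[p]) ^ (β + 1) ∣ w i))
    (vlam : ℕ) (hv₁ : (p : ℤ_[p]) ^ vlam ∣ lam) (hv₂ : ¬ ((p : ℤ_[p]) ^ (vlam + 1) ∣ lam))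
    (hcong : ∀ i, (p : ℤ_[p]) ^ n ∣ (g.mulVec w - lam • w) i) :
    (∃ ν : ℤ_[p], g.charpoly.eval ν = 0 ∧ (p : ℤ_[p]) ^ (vlam + 3) ∣ (ν - lam)) ∨
      (β : ℤ) ≥ (n : ℤ) - 2 * (2 + (vlam : ℤ)) :=
  approx_eigenvector_dichotomy_general p n g hg w lam β hβ₁ hβ₂ vlam hv₂ hcong
end

section
/- Let ℓ be a prime and s a non-negative integer, with s ≥ 2 if ℓ = 2 and s ≥ 1 if ℓ ∈ {3, 5}. Let t ≥ 0 and let W ⊆ 𝔰𝔩₂(ℤ_ℓ) be a Lie subalgebra whose image modulo ℓ^{t+1} is nonzero, and which is stable under conjugation by every element of B_ℓ(s) = {x ∈ SL₂(ℤ_ℓ) : x ≡ Id (mod ℓ^s)}. Then W contains ℓ^{t+4s+4v}·𝔰𝔩₂(ℤ_ℓ), where v = 1 if ℓ = 2 and v = 0 otherwise. -/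
/-!
Conjugating `x ∈ W` by the unipotent elements `1 ± q • n` of the congruence subgroup (`n = E` or
`F`, so `n² = 0`), the difference and the sum of the two conjugates give `2q⁅n, x⁆ ∈ W` and
`2q² n x n ∈ W`, and `E x E = x₁₀ E`, `F x F = x₀₁ F`. Alternating these brackets and
sandwiches moves every entry `u` of a traceless `w ∈ W` onto each of `E, F, H` with a loss of at
most `16 q⁴`, so `16 q⁴ u • 𝔰𝔩₂ ⊆ W`. Over `ℤ_ℓ` an entry not divisible by `ℓ^{t+1}` divides
`ℓ^t`, and `16 ∣ ℓ^{4v}`.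
-/

attribute [local instance 100] LieRing.ofAssociativeRing

open Matrix

theorem Submodule.smul_mem_of_dvd {R M : Type*} [CommSemiring R] [AddCommMonoid M]
    [Module R M] (W : Submodule R M) {a b : R} {x : M} (hab : a ∣ b) (h : a • x ∈ W) :
    b • x ∈ W := by
  obtain ⟨c, rfl⟩ := hab
  rw [mul_comm, mul_smul]
  exact W.smul_mem c h

section UnipotentConjugation

variable {R A : Type*} [CommRing R] [Ring A] [Algebra R A]

theorem one_add_smul_mul_mul_one_sub_smul (c : R) (n x : A) :
    (1 + c • n) * x * (1 - c • n) = x + c • ⁅n, x⁆ - (c * c) • (n * x * n) := by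
  simp only [Ring.lie_def, add_mul, mul_sub, smul_mul_assoc, mul_smul_comm, one_mul, mul_one]
  module

variable {W : Submodule R A} {q : R} {n : A}

theorem two_mul_smul_lie_mem
    (hn : ∀ c, q ∣ c → ∀ x ∈ W, (1 + c • n) * x * (1 - c • n) ∈ W) {x : A} (hx : x ∈ W) :
    (2 * q) • ⁅n, x⁆ ∈ W := by
  have h := W.sub_mem (hn q dvd_rfl x hx) (hn (-q) (dvd_neg.mpr dvd_rfl) x hx)
  rw [one_add_smul_mul_mul_one_sub_smul, one_add_smul_mul_mul_one_sub_smul] at h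
  convert h using 1
  module

theorem two_mul_mul_smul_mul_mul_mem
    (hn : ∀ c, q ∣ c → ∀ x ∈ W, (1 + c • n) * x * (1 - c • n) ∈ W) {x : A} (hx : x ∈ W) :
    (2 * q * q) • (n * x * n) ∈ W := by
  have h := W.sub_mem (W.smul_mem 2 hx)
    (W.add_mem (hn q dvd_rfl x hx) (hn (-q) (dvd_neg.mpr dvd_rfl) x hx))
  rw [one_add_smul_mul_mul_one_sub_smul, one_add_smul_mul_mul_one_sub_smul] at h
  convert h using 1
  module

end UnipotentConjugation

section SL2

def sl2E (R : Type*) [Ring R] : Matrix (Fin 2) (Fin 2) R := !![0, 1; 0, 0]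
def sl2F (R : Type*) [Ring R] : Matrix (Fin 2) (Fin 2) R := !![0, 0; 1, 0]
def sl2H (R : Type*) [Ring R] : Matrix (Fin 2) (Fin 2) R := !![1, 0; 0, -1]

variable {R : Type*} [Ring R]

theorem sl2E_mul_self : sl2E R * sl2E R = 0 := by
  ext i j; fin_cases i <;> fin_cases j <;> simp [sl2E]

theorem sl2F_mul_self : sl2F R * sl2F R = 0 := by
  ext i j; fin_cases i <;> fin_cases j <;> simp [sl2F]

theorem eq_smul_sl2H_add_smul_sl2E_add_smul_sl2F {x : Matrix (Fin 2) (Fin 2) R}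
    (hx : x.trace = 0) : x = x 0 0 • sl2H R + x 0 1 • sl2E R + x 1 0 • sl2F R := by
  have h11 : x 1 1 = -x 0 0 := eq_neg_of_add_eq_zero_right (by rwa [trace_fin_two] at hx)
  ext i j; fin_cases i <;> fin_cases j <;> simp [sl2E, sl2F, sl2H, h11]

theorem sl2E_mul_mul_sl2E (x : Matrix (Fin 2) (Fin 2) R) :
    sl2E R * x * sl2E R = x 1 0 • sl2E R := by
  ext i j
  fin_cases i <;> fin_cases j <;> simp [sl2E, mul_apply, vecMul, dotProduct, Fin.sum_univ_two]

theorem sl2F_mul_mul_sl2F (x : Matrix (Fin 2) (Fin 2) R) :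
    sl2F R * x * sl2F R = x 0 1 • sl2F R := by
  ext i j
  fin_cases i <;> fin_cases j <;> simp [sl2F, mul_apply, vecMul, dotProduct, Fin.sum_univ_two]

theorem lie_sl2E_apply_zero_one (x : Matrix (Fin 2) (Fin 2) R) :
    ⁅sl2E R, x⁆ 0 1 = x 1 1 - x 0 0 := by
  simp [Ring.lie_def, sl2E, mul_apply, vecMul, dotProduct, Fin.sum_univ_two]

theorem lie_sl2F_apply_one_zero (x : Matrix (Fin 2) (Fin 2) R) :
    ⁅sl2F R, x⁆ 1 0 = x 0 0 - x 1 1 := by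
  simp [Ring.lie_def, sl2F, mul_apply, vecMul, dotProduct, Fin.sum_univ_two]

theorem lie_sl2E_sl2F : ⁅sl2E R, sl2F R⁆ = sl2H R := by
  ext i j; fin_cases i <;> fin_cases j <;> simp [Ring.lie_def, sl2E, sl2F, sl2H]

theorem lie_sl2E_sl2H : ⁅sl2E R, sl2H R⁆ = (-2 : R) • sl2E R := by
  ext i j; fin_cases i <;> fin_cases j <;> (simp [Ring.lie_def, sl2E, sl2H]; try norm_num)

theorem lie_sl2F_sl2H : ⁅sl2F R, sl2H R⁆ = (2 : R) • sl2F R := by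
  ext i j; fin_cases i <;> fin_cases j <;> (simp [Ring.lie_def, sl2F, sl2H]; try norm_num)

end SL2

section CongruenceSubgroup

variable {R : Type*} [CommRing R]

theorem det_one_add_smul_sl2E (c : R) : (1 + c • sl2E R : Matrix (Fin 2) (Fin 2) R).det = 1 := by
  simp [det_fin_two, sl2E]

theorem det_one_add_smul_sl2F (c : R) : (1 + c • sl2F R : Matrix (Fin 2) (Fin 2) R).det = 1 := by
  simp [det_fin_two, sl2F]

-- Stability under conjugation by the level-`q` congruence subgroup `{g ∈ SL₂(R) | g ≡ 1 mod q}`.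
def CongruenceStable (q : R) (W : Submodule R (Matrix (Fin 2) (Fin 2) R)) : Prop :=
  ∀ g : Matrix (Fin 2) (Fin 2) R, g.det = 1 → (∀ i j, q ∣ (g - 1) i j) →
    ∀ x ∈ W, g * x * g⁻¹ ∈ W

namespace CongruenceStable

variable {q : R} {W : Submodule R (Matrix (Fin 2) (Fin 2) R)}

theorem conj_mem (hW : CongruenceStable q W) {n : Matrix (Fin 2) (Fin 2) R} (hn : n * n = 0)
    (hdet : ∀ c : R, (1 + c • n).det = 1) :
    ∀ c, q ∣ c → ∀ x ∈ W, (1 + c • n) * x * (1 - c • n) ∈ W := by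
  intro c hc x hx
  have hinv : (1 + c • n)⁻¹ = 1 - c • n := by
    refine inv_eq_right_inv ?_
    rw [mul_sub, mul_one, add_mul, one_mul, smul_mul_smul_comm, hn, smul_zero, add_zero,
      add_sub_cancel_right]
  rw [← hinv]
  exact hW _ (hdet c) (fun i j => by simpa using hc.mul_right (n i j)) x hx

theorem smul_sl2E_mem (hW : CongruenceStable q W) {x : Matrix (Fin 2) (Fin 2) R} (hx : x ∈ W) :
    (2 * q * q * x 1 0) • sl2E R ∈ W := by
  have h := two_mul_mul_smul_mul_mul_mem (hW.conj_mem sl2E_mul_self det_one_add_smul_sl2E) hx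
  rwa [sl2E_mul_mul_sl2E, smul_smul] at h

theorem smul_sl2F_mem (hW : CongruenceStable q W) {x : Matrix (Fin 2) (Fin 2) R} (hx : x ∈ W) :
    (2 * q * q * x 0 1) • sl2F R ∈ W := by
  have h := two_mul_mul_smul_mul_mul_mem (hW.conj_mem sl2F_mul_self det_one_add_smul_sl2F) hx
  rwa [sl2F_mul_mul_sl2F, smul_smul] at h

theorem smul_lie_sl2E_mem (hW : CongruenceStable q W) {r : R} {x : Matrix (Fin 2) (Fin 2) R}
    (hx : r • x ∈ W) : (2 * q * r) • ⁅sl2E R, x⁆ ∈ W := by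
  have h := two_mul_smul_lie_mem (hW.conj_mem sl2E_mul_self det_one_add_smul_sl2E) hx
  rwa [lie_smul, smul_smul] at h

theorem smul_lie_sl2F_mem (hW : CongruenceStable q W) {r : R} {x : Matrix (Fin 2) (Fin 2) R}
    (hx : r • x ∈ W) : (2 * q * r) • ⁅sl2F R, x⁆ ∈ W := by
  have h := two_mul_smul_lie_mem (hW.conj_mem sl2F_mul_self det_one_add_smul_sl2F) hx
  rwa [lie_smul, smul_smul] at h

theorem smul_sl2_basis_mem (hW : CongruenceStable q W) {w : Matrix (Fin 2) (Fin 2) R}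
    (hw : w ∈ W) (hw₀ : w.trace = 0) :
    ∀ u ∈ ({w 0 0, w 0 1, w 1 0} : Set R), ∀ X ∈ ({sl2E R, sl2F R, sl2H R} : Set _),
      (16 * q ^ 4 * u) • X ∈ W := by
  have h11 : w 1 1 = -w 0 0 := by rw [trace_fin_two] at hw₀; linear_combination hw₀
  have hcE := hW.smul_sl2E_mem hw
  have hbF := hW.smul_sl2F_mem hw
  have hw₁ : (1 : R) • w ∈ W := by rwa [one_smul]
  -- the diagonal entry `w₀₀` is first moved off the diagonal by a bracket
  have haE := hW.smul_sl2E_mem (hW.smul_lie_sl2F_mem hw₁)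
  rw [Matrix.smul_apply, lie_sl2F_apply_one_zero, h11, smul_eq_mul] at haE
  have haF := hW.smul_sl2F_mem (hW.smul_lie_sl2E_mem hw₁)
  rw [Matrix.smul_apply, lie_sl2E_apply_zero_one, h11, smul_eq_mul] at haF
  have hbH := hW.smul_lie_sl2E_mem hbF
  rw [lie_sl2E_sl2F] at hbH
  have hcH := hW.smul_lie_sl2F_mem hcE
  rw [← lie_skew, lie_sl2E_sl2F, smul_neg, ← neg_smul] at hcH
  have haH := hW.smul_lie_sl2F_mem haE
  rw [← lie_skew, lie_sl2E_sl2F, smul_neg, ← neg_smul] at haH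
  have hbE := hW.smul_lie_sl2E_mem hbH
  rw [lie_sl2E_sl2H, smul_smul] at hbE
  have hcF := hW.smul_lie_sl2F_mem hcH
  rw [lie_sl2F_sl2H, smul_smul] at hcF
  rintro u (rfl | rfl | rfl) X (rfl | rfl | rfl)
  · exact W.smul_mem_of_dvd ⟨2 * q, by ring⟩ haE
  · exact W.smul_mem_of_dvd ⟨-2 * q, by ring⟩ haF
  · exact W.smul_mem_of_dvd ⟨-1, by ring⟩ haH
  · exact W.smul_mem_of_dvd ⟨-1, by ring⟩ hbE
  · exact W.smul_mem_of_dvd ⟨8 * q ^ 2, by ring⟩ hbF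
  · exact W.smul_mem_of_dvd ⟨4 * q, by ring⟩ hbH
  · exact W.smul_mem_of_dvd ⟨8 * q ^ 2, by ring⟩ hcE
  · exact W.smul_mem_of_dvd ⟨-1, by ring⟩ hcF
  · exact W.smul_mem_of_dvd ⟨-4 * q, by ring⟩ hcH

theorem sixteen_mul_pow_four_mul_smul_mem (hW : CongruenceStable q W)
    {w : Matrix (Fin 2) (Fin 2) R} (hw : w ∈ W) (hw₀ : w.trace = 0) (i j : Fin 2)
    {x : Matrix (Fin 2) (Fin 2) R} (hx : x.trace = 0) : (16 * q ^ 4 * w i j) • x ∈ W := by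
  have hbasis := hW.smul_sl2_basis_mem hw hw₀
  suffices h : ∀ X ∈ ({sl2E R, sl2F R, sl2H R} : Set _), (16 * q ^ 4 * w i j) • X ∈ W by
    rw [eq_smul_sl2H_add_smul_sl2E_add_smul_sl2F hx]
    simp only [smul_add, smul_comm (16 * q ^ 4 * w i j) (x _ _)]
    refine W.add_mem (W.add_mem ?_ ?_) ?_ <;> refine W.smul_mem _ (h _ (by simp))
  have h11 : w 1 1 = -w 0 0 := by rw [trace_fin_two] at hw₀; linear_combination hw₀
  fin_cases i <;> fin_cases j
  · exact hbasis _ (by simp)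
  · exact hbasis _ (by simp)
  · exact hbasis _ (by simp)
  · intro X hX
    simpa [h11] using W.neg_mem (hbasis _ (by simp) X hX)

end CongruenceStable

end CongruenceSubgroup

theorem IsDiscreteValuationRing.dvd_pow_of_not_pow_succ_dvd {R : Type*} [CommRing R]
    [IsDomain R] [IsDiscreteValuationRing R] {ϖ u : R} (hϖ : Irreducible ϖ) {t : ℕ}
    (h : ¬ ϖ ^ (t + 1) ∣ u) : u ∣ ϖ ^ t := by
  rw [← addVal_le_iff_dvd, hϖ.addVal_pow] at h ⊢
  push_cast at h
  exact Order.le_of_lt_add_one (not_le.mp h)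

theorem PadicInt.two_dvd_pow (p : ℕ) [Fact p.Prime] :
    (2 : ℤ_[p]) ∣ (p : ℤ_[p]) ^ (if p = 2 then 1 else 0) := by
  split_ifs with hp
  · subst hp; simp
  · have h2 : ‖((2 : ℕ) : ℤ_[p])‖ = 1 :=
      norm_natCast_eq_one_iff.mpr ((Nat.coprime_primes Fact.out Nat.prime_two).mpr hp)
    exact (isUnit_iff.mpr (by exact_mod_cast h2)).dvd

theorem conj_stable_subalgebra_contains_general (p : ℕ) [Fact p.Prime] (s t : ℕ)
    (W : LieSubalgebra ℤ_[p] (Matrix (Fin 2) (Fin 2) ℤ_[p]))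
    (hWsl : ∀ x ∈ W, Matrix.trace x = 0)
    (hWnz : ∃ x ∈ W, ∃ i j, ¬ ((p : ℤ_[p]) ^ (t + 1) ∣ x i j))
    (hWconj : ∀ h : Matrix (Fin 2) (Fin 2) ℤ_[p], h.det = 1 →
      (∀ i j, (p : ℤ_[p]) ^ s ∣ (h - 1) i j) →
      ∀ x ∈ W, h * x * h⁻¹ ∈ W) :
    ∀ x : Matrix (Fin 2) (Fin 2) ℤ_[p], Matrix.trace x = 0 →
      (p : ℤ_[p]) ^ (t + 4 * s + 4 * (if p = 2 then 1 else 0)) • x ∈ W := by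
  intro x hx
  obtain ⟨w, hw, i, j, hwij⟩ := hWnz
  obtain ⟨a, ha⟩ :=
    IsDiscreteValuationRing.dvd_pow_of_not_pow_succ_dvd PadicInt.irreducible_p hwij
  obtain ⟨b, hb⟩ := pow_dvd_pow_of_dvd (PadicInt.two_dvd_pow p) 4
  have hmem := CongruenceStable.sixteen_mul_pow_four_mul_smul_mem (W := W.toSubmodule) hWconj hw
    (hWsl w hw) i j hx
  refine W.toSubmodule.smul_mem_of_dvd ⟨a * b, ?_⟩ hmem
  rw [pow_add, pow_add, ha, pow_mul, mul_comm 4, pow_mul, hb]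
  ring

/-- A Lie subalgebra `W ⊆ 𝔰𝔩₂(ℤ_ℓ)` which is nonzero modulo `ℓ^{t+1}` and stable
under conjugation by the principal congruence subgroup `B_ℓ(s)` (with `s ≥ 2`
if `ℓ = 2` and `s ≥ 1` if `ℓ ∈ {3,5}`) contains `ℓ^{t+4s+4v}·𝔰𝔩₂(ℤ_ℓ)`, where
`v = 1` if `ℓ = 2` and `v = 0` otherwise. -/
theorem conj_stable_subalgebra_contains (p : ℕ) [Fact p.Prime] (s t : ℕ)
    (hs2 : p = 2 → 2 ≤ s) (hs35 : p = 3 ∨ p = 5 → 1 ≤ s)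
    (W : LieSubalgebra ℤ_[p] (Matrix (Fin 2) (Fin 2) ℤ_[p]))
    (hWsl : ∀ x ∈ W, Matrix.trace x = 0)
    (hWnz : ∃ x ∈ W, ∃ i j, ¬ ((p : ℤ_[p]) ^ (t + 1) ∣ x i j))
    (hWconj : ∀ h : Matrix (Fin 2) (Fin 2) ℤ_[p], h.det = 1 →
      (∀ i j, (p : ℤ_[p]) ^ s ∣ (h - 1) i j) →
      ∀ x ∈ W, h * x * h⁻¹ ∈ W) :
    ∀ x : Matrix (Fin 2) (Fin 2) ℤ_[p], Matrix.trace x = 0 →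
      (p : ℤ_[p]) ^ (t + 4 * s + 4 * (if p = 2 then 1 else 0)) • x ∈ W :=
  conj_stable_subalgebra_contains_general p s t W hWsl hWnz hWconj
end
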